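/- arXiv:2006.13388 — 2 statements merged into one kernel-verified Lean document; each statement's English description precedes it below -/
import Mathlib

section
/- Let n ≥ 1 and let X_1,...,X_n, Y_1,...,Y_n be indeterminates (or elements of a field such that all denominators are nonzero). Then det_{1≤i,j≤n} ( 1/(X_i + Y_j) ) = ∏_{1≤i<j≤n} (X_j - X_i)(Y_j - Y_i) / ∏_{i,j=1}^{n} (X_i + Y_j). -/
/-!
Subtracting multiples of the first row clears the first column, so `det C = C₀₀ * det S` for the
Schur complement `S` of the corner entry. For the Cauchy matrix `C = ((xᵢ + yⱼ)⁻¹)` one computes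
`Sᵢⱼ = (xᵢ - x₀) / (xᵢ + y₀) * (yⱼ - y₀) / (x₀ + yⱼ) * (xᵢ + yⱼ)⁻¹` for `i, j ≥ 1`: the Schur
complement is the smaller Cauchy matrix scaled by diagonal matrices on both sides, and the formula
follows by induction on `n`.
-/

open Finset

theorem Fin.prod_prod_Ioi_succ {M : Type*} [CommMonoid M] {n : ℕ}
    (f : Fin (n + 1) → Fin (n + 1) → M) :
    ∏ i, ∏ j ∈ Ioi i, f i j =
      (∏ j : Fin n, f 0 j.succ) * ∏ i : Fin n, ∏ j ∈ Ioi i, f i.succ j.succ := by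
  simp only [Fin.prod_univ_succ, Fin.prod_Ioi_zero, Fin.prod_Ioi_succ]

theorem Fin.prod_prod_univ_succ {M : Type*} [CommMonoid M] {n : ℕ}
    (f : Fin (n + 1) → Fin (n + 1) → M) :
    ∏ i, ∏ j, f i j =
      (∏ j, f 0 j) * ((∏ i : Fin n, f i.succ 0) * ∏ i : Fin n, ∏ j : Fin n, f i.succ j.succ) := by
  rw [Fin.prod_univ_succ]
  simp only [Fin.prod_univ_succ (f _), prod_mul_distrib]

namespace Matrix

variable {K : Type*} [Field K]

theorem det_succ_eq_mul_det_schur {n : ℕ} (A : Matrix (Fin (n + 1)) (Fin (n + 1)) K)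
    (hA : A 0 0 ≠ 0) :
    A.det = A 0 0 *
      det (of fun i j : Fin n => A i.succ j.succ - A i.succ 0 * (A 0 0)⁻¹ * A 0 j.succ) := by
  set B : Matrix (Fin (n + 1)) (Fin (n + 1)) K :=
    of fun i j => if i = 0 then A 0 j else A i j - A i 0 * (A 0 0)⁻¹ * A 0 j
  have hAB : A.det = B.det := by
    refine det_eq_of_forall_row_eq_smul_add_const (fun i => if i = 0 then 0 else A i 0 * (A 0 0)⁻¹)
      0 (if_pos rfl) fun i j => ?_
    by_cases hi : i = 0
    · subst hi; simp [B]
    · simp [B, hi]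
  rw [hAB, det_succ_column_zero, Fin.sum_univ_succ]
  simp only [B, of_apply, Fin.succ_ne_zero, ↓reduceIte, inv_mul_cancel_right₀ hA, sub_self,
    mul_zero, zero_mul, sum_const_zero, add_zero, Fin.val_zero, pow_zero, one_mul,
    Fin.succAbove_zero]
  rfl

def cauchy {m n : Type*} (X : m → K) (Y : n → K) : Matrix m n K :=
  of fun i j => (X i + Y j)⁻¹

@[simp]
theorem cauchy_apply {m n : Type*} (X : m → K) (Y : n → K) (i : m) (j : n) :
    cauchy X Y i j = (X i + Y j)⁻¹ :=
  rfl

theorem det_cauchy_succ {n : ℕ} (X Y : Fin (n + 1) → K) (h : ∀ i j, X i + Y j ≠ 0) :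
    (cauchy X Y).det =
      (∏ i : Fin n, (X i.succ - X 0) * (Y i.succ - Y 0)) /
        ((∏ j, (X 0 + Y j)) * ∏ i : Fin n, (X i.succ + Y 0)) *
        (cauchy (fun i : Fin n => X i.succ) (fun j : Fin n => Y j.succ)).det := by
  have hSchur : (of fun i j : Fin n => cauchy X Y i.succ j.succ -
      cauchy X Y i.succ 0 * (cauchy X Y 0 0)⁻¹ * cauchy X Y 0 j.succ) =
      diagonal (fun i => (X i.succ - X 0) / (X i.succ + Y 0)) *
        cauchy (fun i : Fin n => X i.succ) (fun j : Fin n => Y j.succ) *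
        diagonal (fun j => (Y j.succ - Y 0) / (X 0 + Y j.succ)) := by
    ext i j
    have := h i.succ j.succ
    have := h i.succ 0
    have := h 0 j.succ
    have := h 0 0
    simp only [cauchy_apply, of_apply, mul_diagonal, diagonal_mul]
    field_simp
    ring
  rw [det_succ_eq_mul_det_schur _ (inv_ne_zero (h 0 0)), hSchur, det_mul, det_mul, det_diagonal,
    det_diagonal, cauchy_apply, Fin.prod_univ_succ, prod_mul_distrib, prod_div_distrib,
    prod_div_distrib]
  have := h 0 0
  have : ∏ i : Fin n, (X i.succ + Y 0) ≠ 0 := prod_ne_zero_iff.2 fun i _ => h _ _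
  have : ∏ i : Fin n, (X 0 + Y i.succ) ≠ 0 := prod_ne_zero_iff.2 fun i _ => h _ _
  field_simp

end Matrix

theorem cauchy_determinant_general {F : Type*} [Field F] (n : ℕ)
    (X Y : Fin n → F) (h : ∀ i j, X i + Y j ≠ 0) :
    Matrix.det (Matrix.of fun i j : Fin n => (X i + Y j)⁻¹) =
      (∏ i : Fin n, ∏ j ∈ Finset.Ioi i, ((X j - X i) * (Y j - Y i))) /
        ∏ i : Fin n, ∏ j : Fin n, (X i + Y j) := by
  induction n with
  | zero => simp
  | succ n ih =>
    have ih' : (Matrix.cauchy (fun i : Fin n => X i.succ) (fun j : Fin n => Y j.succ)).det = _ :=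
      ih _ _ fun i j => h i.succ j.succ
    rw [← Matrix.cauchy, Matrix.det_cauchy_succ X Y h, ih', Fin.prod_prod_Ioi_succ,
      Fin.prod_prod_univ_succ, div_mul_div_comm, mul_assoc]

/-- Cauchy determinant identity: for `n ≥ 1` and elements `X₁,…,Xₙ, Y₁,…,Yₙ` of
a field such that all denominators `Xᵢ + Yⱼ` are nonzero,
`det(1/(Xᵢ+Yⱼ)) = ∏_{i<j} (Xⱼ-Xᵢ)(Yⱼ-Yᵢ) / ∏_{i,j} (Xᵢ+Yⱼ)`. -/
theorem cauchy_determinant {F : Type*} [Field F] (n : ℕ) (hn : 1 ≤ n)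
    (X Y : Fin n → F) (h : ∀ i j, X i + Y j ≠ 0) :
    Matrix.det (Matrix.of fun i j : Fin n => (X i + Y j)⁻¹) =
      (∏ i : Fin n, ∏ j ∈ Finset.Ioi i, ((X j - X i) * (Y j - Y i))) /
        ∏ i : Fin n, ∏ j : Fin n, (X i + Y j) :=
  cauchy_determinant_general n X Y h
end

section
/- The number of column strict shifted plane partitions of class l-1 (l ≥ 2) with at most n parts in the first row equals det_{0≤i,j≤n-1} ( C(i+j+l-1, i) + δ_{i,j} ), where C denotes the binomial coefficient and δ the Kronecker delta. -/
/-!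
Lindström–Gessel–Viennot. Row `k` of a column strict shifted plane partition of class `c`, of
length `s + 1`, becomes a lattice path from `(-s, 0)` to `(0, c + s)` whose east steps lie at
the heights `part k j - 1`, `1 ≤ j ≤ s`: the class condition fixes the endpoints, weak decrease
along the row makes this a path, and strict decrease down the columns says exactly that the
paths of consecutive rows do not meet. So the partitions are the families of pairwise
non-intersecting paths from a subset of the sources `(-i, 0)`, `i < n`, to the matching sinks
`(0, c + i)`. Entry `(i, j)` of the matrix counts the paths from source `i` to sink `j`, plus a
phantom path when `i = j`, so the determinant is the signed count of systems of such paths.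
Switching tails at the first meeting point cancels the intersecting systems in pairs; the
others have the identity permutation and a path or a phantom at each source, i.e. they are the
families above.
-/

/-- A column strict shifted plane partition of class `c` with at most `n` parts in the first
row: rows are indexed `0, …, rows-1`, row `i` has `len i` parts `part i 0, …, part i (len i -1)`
(row `i` being indented `i` cells, so the cell `(i, j)` sits in absolute column `i + j`).
The parts are positive, weakly decrease along rows and strictly decrease down columns, the row
lengths strictly decrease (a strict partition shape), and the first part of each row equals
`c` plus the length of that row.  The functions are normalised to `0` outside the diagram so
that equal plane partitions give equal structures. -/
structure CSSPP (c n : ℕ) where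
  rows : ℕ
  len : ℕ → ℕ
  part : ℕ → ℕ → ℕ
  len_strict : ∀ i, i + 1 < rows → len (i + 1) < len i
  len_pos : ∀ i, i < rows → 0 < len i
  first_row_le : 0 < rows → len 0 ≤ n
  part_pos : ∀ i j, i < rows → j < len i → 0 < part i j
  row_weak_dec : ∀ i j, i < rows → j + 1 < len i → part i (j + 1) ≤ part i j
  col_strict_dec : ∀ i j, i + 1 < rows → j < len (i + 1) → part (i + 1) j < part i (j + 1)
  class_eq : ∀ i, i < rows → part i 0 = c + len i
  len_eq_zero : ∀ i, rows ≤ i → len i = 0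
  part_eq_zero : ∀ i j, ¬(i < rows ∧ j < len i) → part i j = 0

open Finset

lemma exists_eq_zero_of_le_succ_add_one {f : ℕ → ℤ} (hf : ∀ t, f t ≤ f (t + 1) + 1)
    {T : ℕ} (h0 : 0 ≤ f 0) (hT : f T ≤ 0) : ∃ t ≤ T, f t = 0 := by
  induction T with
  | zero => exact ⟨0, le_rfl, le_antisymm hT h0⟩
  | succ u ih =>
    by_cases h : f u ≤ 0
    · obtain ⟨t, ht, h⟩ := ih h
      exact ⟨t, by omega, h⟩
    · exact ⟨u + 1, le_rfl, by have := hf u; omega⟩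

lemma le_card_filter_Icc_iff {P : ℕ → Prop} [DecidablePred P] {s j : ℕ}
    (hP : ∀ i i', i ≤ i' → i' ≤ s → P i → P i') (hj : 1 ≤ j) (hjs : j ≤ s) :
    s + 1 - j ≤ #{i ∈ Icc 1 s | P i} ↔ P j := by
  constructor
  · intro hcard
    by_contra hPj
    have hsub : {i ∈ Icc 1 s | P i} ⊆ Icc (j + 1) s := fun i hi => by
      simp only [mem_filter, mem_Icc] at hi ⊢
      exact ⟨by_contra fun hij => hPj (hP i j (by omega) hjs hi.2), hi.1.2⟩
    have := card_le_card hsub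
    simp only [Nat.card_Icc] at this
    omega
  · intro hPj
    have hsub : Icc j s ⊆ {i ∈ Icc 1 s | P i} := fun i hi => by
      simp only [mem_filter, mem_Icc] at hi ⊢
      exact ⟨⟨by omega, hi.2⟩, hP j i hi.1 hi.2 hPj⟩
    simpa using card_le_card hsub

lemma Equiv.Perm.exists_inversion_of_ne_one {α : Type*} [LinearOrder α] [Fintype α]
    {σ : Equiv.Perm α} (hσ : σ ≠ 1) :
    ∃ i j, i < j ∧ σ j < σ i ∧ σ i ≠ i ∧ σ j ≠ j := by
  have hne : σ.support.Nonempty := by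
    rwa [Finset.nonempty_iff_ne_empty, Ne, Equiv.Perm.support_eq_empty_iff]
  set i := σ.support.min' hne
  have hi : σ i ≠ i := Equiv.Perm.mem_support.1 (σ.support.min'_mem hne)
  have hfix : ∀ k < i, σ k = k := fun k hk => by
    by_contra h
    exact (σ.support.min'_le k (Equiv.Perm.mem_support.2 h)).not_gt hk
  have hσi : i < σ i := by
    by_contra! h
    exact hi (σ.injective (hfix _ (h.lt_of_ne hi)))
  obtain ⟨j, hσj⟩ := σ.surjective i
  have hji : j ≠ i := by rintro rfl; exact hi hσj
  have hij : i < j := by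
    by_contra! h
    exact hji (by rw [← hfix j (h.lt_of_ne hji), hσj])
  exact ⟨i, j, hij, by rwa [hσj], hi, by rw [hσj]; exact hji.symm⟩

lemma Matrix.det_eq_sum_sign_of_eq_card {ι R : Type*} [Fintype ι] [DecidableEq ι] [CommRing R]
    (T : ι → ι → Type*) [∀ i j, Fintype (T i j)] (M : Matrix ι ι R)
    (hM : ∀ i j, M i j = Fintype.card (T i j)) :
    M.det =
      ∑ x : Σ σ : Equiv.Perm ι, ∀ i, T i (σ i), ((Equiv.Perm.sign x.1 : ℤ) : R) := by
  rw [← Matrix.det_transpose, Matrix.det_apply, Fintype.sum_sigma]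
  refine Finset.sum_congr rfl fun σ _ => ?_
  simp only [Matrix.transpose_apply, hM, Finset.sum_const, Finset.card_univ, Fintype.card_pi,
    Nat.cast_prod, nsmul_eq_mul, Units.smul_def, zsmul_eq_mul]
  ring

namespace LatticePath

/-- Lattice paths are Boolean sequences of unit steps, `true` for east and `false` for north. -/
def eastCount (p : ℕ → Bool) (t : ℕ) : ℕ := Nat.count (fun s => p s) t

@[simp]
lemma eastCount_zero (p : ℕ → Bool) : eastCount p 0 = 0 := Nat.count_zero _

lemma eastCount_succ (p : ℕ → Bool) (t : ℕ) :
    eastCount p (t + 1) = eastCount p t + if p t then 1 else 0 := Nat.count_succ _ _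

lemma eastCount_mono (p : ℕ → Bool) : Monotone (eastCount p) := Nat.count_monotone _

lemma eastCount_le_self (p : ℕ → Bool) (t : ℕ) : eastCount p t ≤ t := Nat.count_le _

lemma eastCount_succ_le (p : ℕ → Bool) (t : ℕ) :
    eastCount p (t + 1) ≤ eastCount p t + 1 := by
  rw [eastCount_succ]; split <;> omega

lemma eastCount_congr {p q : ℕ → Bool} {t : ℕ} (h : ∀ s < t, p s = q s) :
    eastCount p t = eastCount q t :=
  le_antisymm (Nat.count_mono_left fun s hs hp => by rwa [← h s hs])
    (Nat.count_mono_left fun s hs hq => by rwa [h s hs])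

lemma eastCount_add_of_eq_false {p : ℕ → Bool} {m : ℕ} (hp : ∀ s, m ≤ s → p s = false)
    (d : ℕ) : eastCount p (m + d) = eastCount p m := by
  have : Nat.count (fun k => p (m + k)) d = 0 :=
    Nat.count_iff_forall_not.2 fun k _ => by simp [hp (m + k) (by omega)]
  rw [eastCount, Nat.count_add, this, add_zero]
  rfl

lemma eastCount_eq_card_filter (p : ℕ → Bool) (m : ℕ) :
    eastCount p m = #{t : Fin m | p t} := by
  rw [eastCount, Nat.count_eq_card_filter_range, card_filter, card_filter,
    ← Fin.sum_univ_eq_sum_range (fun t => if p t then 1 else 0)]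

/-- `p` runs from `(-a, 0)` to `(0, c + b)`. -/
structure IsPath (c a b : ℕ) (p : ℕ → Bool) : Prop where
  eq_false : ∀ t, c + a + b ≤ t → p t = false
  eastCount_eq : eastCount p (c + a + b) = a

lemma IsPath.eastCount_le {c a b : ℕ} {p : ℕ → Bool} (hp : IsPath c a b p) (t : ℕ) :
    eastCount p t ≤ a := by
  rcases le_or_gt t (c + a + b) with h | h
  · exact hp.eastCount_eq ▸ eastCount_mono p h
  · obtain ⟨d, rfl⟩ := Nat.exists_eq_add_of_le h.le
    rw [eastCount_add_of_eq_false hp.eq_false, hp.eastCount_eq]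

def isPathEquiv (c a b : ℕ) :
    {p : ℕ → Bool // IsPath c a b p} ≃ {s : Finset (Fin (c + a + b)) // #s = a} where
  toFun p := ⟨univ.filter (fun t : Fin _ => p.1 t),
    by rw [← eastCount_eq_card_filter, p.2.eastCount_eq]⟩
  invFun s := ⟨fun t => decide (∃ h : t < c + a + b, ⟨t, h⟩ ∈ s.1),
    ⟨fun t ht => by simp only [decide_eq_false_iff_not]; rintro ⟨h, -⟩; omega,
    by rw [eastCount_eq_card_filter]; simpa using s.2⟩⟩
  left_inv p := by
    ext t
    by_cases ht : t < c + a + b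
    · simp [ht]
    · simp [ht, p.2.eq_false t (by omega)]
  right_inv s := by ext; simp

noncomputable instance (c a b : ℕ) : Fintype {p : ℕ → Bool // IsPath c a b p} :=
  Fintype.ofEquiv _ (isPathEquiv c a b).symm

lemma card_isPath (c a b : ℕ) :
    Fintype.card {p : ℕ → Bool // IsPath c a b p} = (c + a + b).choose a := by
  rw [Fintype.card_congr (isPathEquiv c a b), Fintype.card_finset_len, Fintype.card_fin]

section Meeting

/-- After `t` steps a path started at `(-a, 0)` is at `(eastCount p t - a, t - eastCount p t)`. -/
def MeetAt (a a' : ℕ) (p q : ℕ → Bool) (tp tq : ℕ) : Prop :=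
  tp + a' = tq + a ∧ eastCount p tp + a' = eastCount q tq + a

def Meets (c a b a' b' : ℕ) (p q : ℕ → Bool) : Prop :=
  ∃ tp ≤ c + a + b, ∃ tq ≤ c + a' + b', MeetAt a a' p q tp tq

variable {c a b a' b' : ℕ} {p q : ℕ → Bool} {tp tq : ℕ}

lemma MeetAt.symm (h : MeetAt a a' p q tp tq) : MeetAt a' a q p tq tp :=
  ⟨h.1.symm, h.2.symm⟩

lemma Meets.symm (h : Meets c a b a' b' p q) : Meets c a' b' a b q p := by
  obtain ⟨tp, htp, tq, htq, hm⟩ := h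
  exact ⟨tq, htq, tp, htp, hm.symm⟩

def splice (p q : ℕ → Bool) (t₀ t₁ : ℕ) : ℕ → Bool :=
  fun t => if t < t₀ then p t else q (t - t₀ + t₁)

lemma eastCount_splice_of_le {t₀ t₁ t : ℕ} (h : t ≤ t₀) :
    eastCount (splice p q t₀ t₁) t = eastCount p t :=
  eastCount_congr fun s hs => if_pos (by omega)

lemma eastCount_splice_add (t₀ t₁ d : ℕ) :
    eastCount (splice p q t₀ t₁) (t₀ + d) + eastCount q t₁ =
      eastCount p t₀ + eastCount q (t₁ + d) := by
  have htail : Nat.count (fun k => splice p q t₀ t₁ (t₀ + k)) d =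
      Nat.count (fun k => q (k + t₁)) d := by
    congr; funext k; simp [splice, add_comm k t₁]
  rw [eastCount, Nat.count_add, htail, ← eastCount, eastCount_splice_of_le le_rfl, eastCount,
    eastCount, eastCount, add_comm t₁ d, Nat.count_add' _ d t₁]
  ring

lemma splice_splice (tp tq : ℕ) : splice (splice p q tp tq) (splice q p tq tp) tp tq = p := by
  funext t
  by_cases h : t < tp
  · simp [splice, h]
  · simp only [splice, h, if_false, show ¬ t - tp + tq < tq by omega]
    congr 1
    omega

lemma MeetAt.splice (hm : MeetAt a a' p q tp tq) :
    MeetAt a a' (splice p q tp tq) (splice q p tq tp) tp tq := by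
  rw [MeetAt, eastCount_splice_of_le le_rfl, eastCount_splice_of_le le_rfl]
  exact hm

lemma IsPath.splice (hp : IsPath c a b p) (hq : IsPath c a' b' q)
    (htq : tq ≤ c + a' + b') (hm : MeetAt a a' p q tp tq) :
    IsPath c a b' (splice p q tp tq) where
  eq_false t ht := by
    have := hm.1
    simp only [LatticePath.splice, if_neg (show ¬ t < tp by omega)]
    exact hq.eq_false _ (by omega)
  eastCount_eq := by
    have := hm.1
    have key := eastCount_splice_add (p := p) (q := q) tp tq (c + a + b' - tp)
    rw [show tp + (c + a + b' - tp) = c + a + b' by omega,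
      show tq + (c + a + b' - tp) = c + a' + b' by omega, hq.eastCount_eq] at key
    have := hm.2
    have := hp.eastCount_le tp
    have := hq.eastCount_le tq
    omega

lemma meetAt_splice_of_le {e : ℕ} {r : ℕ → Bool} {s t t₁ : ℕ} (hts : t ≤ tp) :
    MeetAt e a r (splice p q tp t₁) s t ↔ MeetAt e a r p s t := by
  rw [MeetAt, MeetAt, eastCount_splice_of_le hts]

lemma meetAt_splice_of_ge {e : ℕ} {r : ℕ → Bool} {s t : ℕ}
    (hm : MeetAt a a' p q tp tq) (hts : tp ≤ t) :
    MeetAt e a r (splice p q tp tq) s t ↔ MeetAt e a' r q s (t - tp + tq) := by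
  obtain ⟨d, rfl⟩ := Nat.exists_eq_add_of_le hts
  have key := eastCount_splice_add (p := p) (q := q) tp tq d
  rw [show tp + d - tp + tq = tq + d by omega]
  unfold MeetAt
  have := hm.1
  have := hm.2
  omega

lemma IsPath.meets_of_lt_of_lt (hp : IsPath c a b p) (hq : IsPath c a' b' q)
    (ha : a < a') (hb : b' < b) : Meets c a b a' b' p q := by
  -- `f t` compares the positions of the two paths on the antidiagonal `t - a`.
  let f : ℕ → ℤ := fun t => (eastCount p t : ℤ) + a' - (eastCount q (t + (a' - a)) + a)
  have hf : ∀ t, f t ≤ f (t + 1) + 1 := fun t => by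
    have h1 := eastCount_mono p (Nat.le_add_right t 1)
    have h2 := eastCount_succ_le q (t + (a' - a))
    simp only [f, show t + 1 + (a' - a) = t + (a' - a) + 1 by omega]
    omega
  have h0 : 0 ≤ f 0 := by
    have := eastCount_le_self q (0 + (a' - a))
    simp only [f, eastCount_zero]
    omega
  have hT : f (c + a + b') ≤ 0 := by
    have := hp.eastCount_le (c + a + b')
    simp only [f, show c + a + b' + (a' - a) = c + a' + b' by omega, hq.eastCount_eq]
    omega
  obtain ⟨t, ht, hft⟩ := exists_eq_zero_of_le_succ_add_one hf h0 hT
  exact ⟨t, by omega, t + (a' - a), by omega, by omega, by simp only [f] at hft; omega⟩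

end Meeting

noncomputable def eastStepTime (p : ℕ → Bool) (m : ℕ) : ℕ := sInf {t | m ≤ eastCount p t}

section eastStepTime

variable {c a b m t : ℕ} {p : ℕ → Bool}

lemma IsPath.eastStepTime_le_iff (hp : IsPath c a b p) (hm : m ≤ a) :
    eastStepTime p m ≤ t ↔ m ≤ eastCount p t := by
  have hne : {t | m ≤ eastCount p t}.Nonempty := ⟨c + a + b, by simpa [hp.eastCount_eq]⟩
  exact ⟨fun h => (Nat.sInf_mem hne).trans (eastCount_mono p h), fun h => Nat.sInf_le h⟩

lemma IsPath.le_eastStepTime (hp : IsPath c a b p) (hm : m ≤ a) : m ≤ eastStepTime p m :=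
  ((hp.eastStepTime_le_iff hm).1 le_rfl).trans (eastCount_le_self p _)

lemma IsPath.eastStepTime_le (hp : IsPath c a b p) (hm : m ≤ a) :
    eastStepTime p m ≤ c + a + b :=
  (hp.eastStepTime_le_iff hm).2 (by rw [hp.eastCount_eq]; exact hm)

lemma IsPath.eastStepTime_strictMono (hp : IsPath c a b p) {m' : ℕ} (hmm : m < m')
    (hm' : m' ≤ a) : eastStepTime p m < eastStepTime p m' := by
  have h1 := (hp.eastStepTime_le_iff hm').1 le_rfl
  have h2 := eastCount_succ_le p (eastStepTime p m' - 1)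
  have h3 := hp.le_eastStepTime hm'
  rw [Nat.sub_add_cancel (by omega)] at h2
  have := (hp.eastStepTime_le_iff (m := m) (t := eastStepTime p m' - 1) (by omega)).2 (by omega)
  omega

lemma IsPath.eq_true_iff (hp : IsPath c a b p) :
    p t = true ↔ ∃ m, 1 ≤ m ∧ m ≤ a ∧ eastStepTime p m = t + 1 := by
  have hsucc := eastCount_succ p t
  constructor
  · intro hpt
    rw [hpt, if_pos rfl] at hsucc
    have hle := hp.eastCount_le (t + 1)
    refine ⟨eastCount p (t + 1), by omega, hle, le_antisymm ?_ ?_⟩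
    · exact (hp.eastStepTime_le_iff hle).2 le_rfl
    · by_contra! h
      have := (hp.eastStepTime_le_iff hle).1 (Nat.le_of_lt_succ h)
      omega
  · rintro ⟨m, -, hma, hm⟩
    have h1 := (hp.eastStepTime_le_iff hma).1 hm.le
    have h2 := mt (hp.eastStepTime_le_iff (t := t) hma).2 (by omega)
    by_contra hpt
    simp only [hpt, if_false] at hsucc
    omega

end eastStepTime

/-- `r 0, …, r s` can be a row of length `s + 1` of a column strict shifted plane partition of
class `c`. -/
structure IsRow (c s : ℕ) (r : ℕ → ℕ) : Prop where
  head : r 0 = c + s + 1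
  succ_le : ∀ j < s, r (j + 1) ≤ r j
  pos : ∀ j ≤ s, 0 < r j

section IsRow

variable {c s : ℕ} {r : ℕ → ℕ}

lemma IsRow.antitoneOn (h : IsRow c s r) : AntitoneOn r (Set.Iic s) :=
  antitoneOn_of_succ_le Set.ordConnected_Iic fun j _ _ hj => by
    simp only [Order.succ_eq_add_one, Set.mem_Iic] at hj ⊢
    exact h.succ_le j (by omega)

lemma IsRow.le_head (h : IsRow c s r) {j : ℕ} (hj : j ≤ s) : r j ≤ c + s + 1 :=
  h.head ▸ h.antitoneOn (Set.mem_Iic.2 (Nat.zero_le s)) (Set.mem_Iic.2 hj) (Nat.zero_le j)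

/-- Entry `j ≥ 1` of the row becomes an east step at height `r j - 1`, which is
step `r j + s - j - 1` of the path, since `s - j` east steps precede it. -/
def pathOfRow (s : ℕ) (r : ℕ → ℕ) (t : ℕ) : Bool :=
  decide (∃ j ∈ (Icc 1 s : Finset ℕ), t + j + 1 = r j + s)

lemma IsRow.add_lt_add_of_lt (h : IsRow c s r) {j j' : ℕ} (hj : j < j') (hj' : j' ≤ s) :
    r j' + j < r j + j' := by
  have := h.antitoneOn (Set.mem_Iic.2 (by omega)) (Set.mem_Iic.2 hj') hj.le
  omega

lemma IsRow.eastCount_pathOfRow (h : IsRow c s r) (t : ℕ) :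
    eastCount (pathOfRow s r) t = #{j ∈ Icc 1 s | r j + s ≤ t + j} := by
  rw [eastCount, Nat.count_eq_card_filter_range]
  refine (card_bij (fun j _ => r j + s - j - 1) ?_ ?_ ?_).symm
  · intro j hj
    simp only [mem_filter, mem_Icc, mem_range] at hj ⊢
    have := h.pos j hj.1.2
    refine ⟨by omega, ?_⟩
    rw [pathOfRow, decide_eq_true_eq]
    exact ⟨j, mem_Icc.2 hj.1, by omega⟩
  · intro j hj j' hj' he
    simp only [mem_filter, mem_Icc] at hj hj'
    have := h.pos j hj.1.2
    have := h.pos j' hj'.1.2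
    by_contra hne
    rcases Nat.lt_or_gt_of_ne hne with hlt | hlt
    · have := h.add_lt_add_of_lt hlt hj'.1.2; omega
    · have := h.add_lt_add_of_lt hlt hj.1.2; omega
  · intro t ht
    rw [mem_filter, mem_range, pathOfRow, decide_eq_true_eq] at ht
    obtain ⟨ht, j, hj, hjt⟩ := ht
    rw [mem_Icc] at hj
    exact ⟨j, by simp only [mem_filter, mem_Icc]; omega, by omega⟩

lemma IsRow.le_eastCount_pathOfRow_iff (h : IsRow c s r) {j : ℕ} (hj : 1 ≤ j) (hjs : j ≤ s)
    (t : ℕ) : s + 1 - j ≤ eastCount (pathOfRow s r) t ↔ r j + s ≤ t + j := by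
  rw [h.eastCount_pathOfRow]
  exact le_card_filter_Icc_iff (fun i i' hii' hi's hi => by
    rcases hii'.lt_or_eq with hlt | rfl
    · have := h.add_lt_add_of_lt hlt hi's; omega
    · exact hi) hj hjs

lemma IsRow.isPath_pathOfRow (h : IsRow c s r) : IsPath c s s (pathOfRow s r) where
  eq_false t ht := by
    simp only [pathOfRow, decide_eq_false_iff_not, not_exists, not_and, mem_Icc]
    intro j hj
    have := h.le_head hj.2
    omega
  eastCount_eq := by
    rw [h.eastCount_pathOfRow, filter_true_of_mem fun j hj => ?_, Nat.card_Icc,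
      Nat.add_sub_cancel]
    obtain ⟨hj1, hjs⟩ := mem_Icc.1 hj
    have := h.le_head hjs
    omega

end IsRow

/-- Entry `j ≥ 1` is one more than the height of the `(s + 1 - j)`-th east step. -/
noncomputable def rowOfPath (c s : ℕ) (p : ℕ → Bool) (j : ℕ) : ℕ :=
  if j = 0 then c + s + 1 else if j ≤ s then eastStepTime p (s + 1 - j) + j - s else 0

section rowOfPath

variable {c s : ℕ} {p : ℕ → Bool}

lemma rowOfPath_of_gt {j : ℕ} (hj : s < j) : rowOfPath c s p j = 0 := by
  rw [rowOfPath, if_neg (by omega), if_neg (by omega)]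

lemma IsPath.rowOfPath_add (hp : IsPath c s s p) {j : ℕ} (h1 : 1 ≤ j) (h2 : j ≤ s) :
    rowOfPath c s p j + s = eastStepTime p (s + 1 - j) + j := by
  have := hp.le_eastStepTime (m := s + 1 - j) (by omega)
  rw [rowOfPath, if_neg (by omega), if_pos h2]
  omega

lemma IsPath.isRow_rowOfPath (hp : IsPath c s s p) : IsRow c s (rowOfPath c s p) where
  head := by rw [rowOfPath, if_pos rfl]
  succ_le j hj := by
    have e1 := hp.rowOfPath_add (j := j + 1) (by omega) (by omega)
    rcases Nat.eq_zero_or_pos j with rfl | h0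
    · have := hp.eastStepTime_le (m := s) le_rfl
      simp only [zero_add, Nat.add_sub_cancel] at e1 ⊢
      rw [show rowOfPath c s p 0 = c + s + 1 from if_pos rfl]
      omega
    · have e2 := hp.rowOfPath_add h0 (by omega)
      have := hp.eastStepTime_strictMono (m := s + 1 - (j + 1)) (m' := s + 1 - j) (by omega)
        (by omega)
      omega
  pos j hj := by
    rcases Nat.eq_zero_or_pos j with rfl | h0
    · rw [rowOfPath, if_pos rfl]; omega
    · have := hp.rowOfPath_add h0 hj
      have := hp.le_eastStepTime (m := s + 1 - j) (by omega)
      omega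

lemma IsPath.pathOfRow_rowOfPath (hp : IsPath c s s p) : pathOfRow s (rowOfPath c s p) = p := by
  funext t
  apply Bool.eq_iff_iff.2
  rw [pathOfRow, decide_eq_true_iff, hp.eq_true_iff]
  constructor
  · rintro ⟨j, hj, hjt⟩
    rw [mem_Icc] at hj
    have := hp.rowOfPath_add hj.1 hj.2
    exact ⟨s + 1 - j, by omega, by omega, by omega⟩
  · rintro ⟨m, hm1, hms, hmt⟩
    have := hp.rowOfPath_add (j := s + 1 - m) (by omega) (by omega)
    rw [show s + 1 - (s + 1 - m) = m by omega] at this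
    exact ⟨s + 1 - m, mem_Icc.2 ⟨by omega, by omega⟩, by omega⟩

end rowOfPath

lemma IsRow.rowOfPath_pathOfRow {c s : ℕ} {r : ℕ → ℕ} (h : IsRow c s r) {j : ℕ}
    (hj : j ≤ s) :
    rowOfPath c s (pathOfRow s r) j = r j := by
  rcases Nat.eq_zero_or_pos j with rfl | h0
  · rw [rowOfPath, if_pos rfl, h.head]
  have hp := h.isPath_pathOfRow
  have hm : s + 1 - j ≤ s := by omega
  have hstep : eastStepTime (pathOfRow s r) (s + 1 - j) = r j + s - j := by
    apply le_antisymm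
    · rw [hp.eastStepTime_le_iff hm, h.le_eastCount_pathOfRow_iff h0 hj]
      omega
    · have := (hp.eastStepTime_le_iff hm).1 le_rfl
      rw [h.le_eastCount_pathOfRow_iff h0 hj] at this
      omega
  have := hp.rowOfPath_add h0 hj
  have := h.pos j hj
  omega

section StrictlyBelow

/-- On each antidiagonal that it crosses, `q` (started at `(-s', 0)`) is strictly east of `p`
(started at `(-s, 0)`). -/
def StrictlyBelow (c s' s : ℕ) (q p : ℕ → Bool) : Prop :=
  ∀ t ≤ c + s' + s', eastCount p (t + (s - s')) + s' < eastCount q t + s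

variable {c s s' : ℕ} {p q : ℕ → Bool}

lemma StrictlyBelow.trans {s'' : ℕ} {r : ℕ → Bool} (hrq : StrictlyBelow c s'' s' r q)
    (hqp : StrictlyBelow c s' s q p) (h₁ : s'' < s') (h₂ : s' < s) :
    StrictlyBelow c s'' s r p := fun t ht => by
  have e1 := hrq t ht
  have e2 := hqp (t + (s' - s'')) (by omega)
  rw [show t + (s' - s'') + (s - s') = t + (s - s'') by omega] at e2
  omega

lemma strictlyBelow_iff_not_meets (h : s' < s) :
    StrictlyBelow c s' s q p ↔ ¬ Meets c s s s' s' p q := by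
  constructor
  · rintro hb ⟨tp, -, tq, htq, hm₁, hm₂⟩
    have := hb tq htq
    rw [show tp = tq + (s - s') by omega] at hm₂
    omega
  · intro hnm t
    induction t with
    | zero =>
      intro _
      have := eastCount_le_self p (0 + (s - s'))
      by_contra! hge
      exact hnm ⟨0 + (s - s'), by omega, 0, by omega, by omega, by omega⟩
    | succ u ih =>
      intro hu
      have := ih (by omega)
      have := eastCount_mono q (Nat.le_add_right u 1)
      have := eastCount_succ_le p (u + (s - s'))
      rw [show u + 1 + (s - s') = u + (s - s') + 1 by omega]
      by_contra! hge
      exact hnm ⟨u + (s - s') + 1, by omega, u + 1, by omega, by omega, by omega⟩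

variable {a b : ℕ → ℕ}

lemma IsRow.lt_of_strictlyBelow (ha : IsRow c s a) (hb : IsRow c s' b) (h : s' < s)
    (hba : StrictlyBelow c s' s (pathOfRow s' b) (pathOfRow s a)) {j : ℕ} (hj : j ≤ s') :
    b j < a (j + 1) := by
  rcases Nat.eq_zero_or_pos j with rfl | hj0
  · have h1 := hba (c + s' + s') le_rfl
    rw [hb.isPath_pathOfRow.eastCount_eq] at h1
    have h2 : ¬ s + 1 - 1 ≤ eastCount (pathOfRow s a) (c + s' + s' + (s - s')) := by omega
    rw [ha.le_eastCount_pathOfRow_iff le_rfl (by omega)] at h2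
    rw [hb.head, zero_add]
    omega
  by_cases hbig : c + s' + j + 1 < a (j + 1)
  · have := hb.le_head hj
    omega
  have := ha.pos (j + 1) (by omega)
  -- after `t + (s - s')` steps the path of `a` has just made the east step of entry `j + 1`
  set t := a (j + 1) + s' - (j + 1)
  have h1 := hba t (by omega)
  have h2 := (ha.le_eastCount_pathOfRow_iff (j := j + 1) (by omega) (by omega)
    (t + (s - s'))).2 (by omega)
  have h3 := (hb.le_eastCount_pathOfRow_iff hj0 hj t).1 (by omega)
  omega

lemma IsRow.strictlyBelow_of_lt (ha : IsRow c s a) (hb : IsRow c s' b) (h : s' < s)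
    (hcol : ∀ j ≤ s', b j < a (j + 1)) :
    StrictlyBelow c s' s (pathOfRow s' b) (pathOfRow s a) := by
  intro t ht
  set m := eastCount (pathOfRow s a) (t + (s - s'))
  have hms : m ≤ s := ha.isPath_pathOfRow.eastCount_le _
  by_contra! hge
  rcases hms.lt_or_eq with hlt | heq
  · have h1 := (ha.le_eastCount_pathOfRow_iff (j := s - m + 1) (by omega) (by omega)
      (t + (s - s'))).1 (by omega)
    have h2 := hcol (s - m) (by omega)
    have h3 := (hb.le_eastCount_pathOfRow_iff (j := s - m) (by omega) (by omega) t).2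
      (by omega)
    omega
  · have h1 := (ha.le_eastCount_pathOfRow_iff (j := 1) le_rfl (by omega)
      (t + (s - s'))).1 (by omega)
    have h2 : b 0 < a 1 := hcol 0 (Nat.zero_le s')
    rw [hb.head] at h2
    omega

end StrictlyBelow

/-- A path from `(-a, 0)` to `(0, c + b)` or, when `a = b`, a phantom `none`: the phantoms
account for the `δ_{ab}` in the matrix. -/
def PathOrPhantom (c a b : ℕ) : Type :=
  {p : Option (ℕ → Bool) // p.elim (a = b) (IsPath c a b)}

def pathOrPhantomEquiv (c a b : ℕ) :
    PathOrPhantom c a b ≃ {p : ℕ → Bool // IsPath c a b p} ⊕ PLift (a = b) where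
  toFun
    | ⟨some p, hp⟩ => .inl ⟨p, hp⟩
    | ⟨none, h⟩ => .inr ⟨h⟩
  invFun
    | .inl p => ⟨some p.1, p.2⟩
    | .inr h => ⟨none, h.down⟩
  left_inv x := by rcases x with ⟨_ | p, h⟩ <;> rfl
  right_inv y := by rcases y with p | h <;> rfl

noncomputable instance (c a b : ℕ) : Fintype (PathOrPhantom c a b) :=
  Fintype.ofEquiv _ (pathOrPhantomEquiv c a b).symm

lemma card_pathOrPhantom (c a b : ℕ) :
    Fintype.card (PathOrPhantom c a b) = (c + a + b).choose a + if a = b then 1 else 0 := by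
  rw [Fintype.card_congr (pathOrPhantomEquiv c a b), Fintype.card_sum, card_isPath]
  split_ifs with h <;> simp [h]

end LatticePath

open LatticePath

def PathSystem (c n : ℕ) : Type :=
  Σ σ : Equiv.Perm (Fin n), ∀ i : Fin n, PathOrPhantom c i (σ i)

noncomputable instance (c n : ℕ) : Fintype (PathSystem c n) := by
  unfold PathSystem; infer_instance

lemma det_eq_sum_sign_pathSystem (R : Type*) [CommRing R] (c n : ℕ) :
    (Matrix.of fun i j : Fin n =>
        (((c + i + j).choose i : ℕ) : R) + if i = j then 1 else 0).det =
      ∑ x : PathSystem c n, ((Equiv.Perm.sign x.1 : ℤ) : R) :=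
  Matrix.det_eq_sum_sign_of_eq_card (fun i j : Fin n => PathOrPhantom c i j) _ fun i j => by
    simp [card_pathOrPhantom, Fin.val_inj]

/-- Pairwise non-meeting paths from `(-i, 0)` to `(0, c + i)`, for `i` in a subset of `Fin n`. -/
def NonIntersectingFamily (c n : ℕ) : Type :=
  {o : Fin n → Option (ℕ → Bool) // (∀ i p, o i = some p → IsPath c i i p) ∧
    ∀ i j p q, i ≠ j → o i = some p → o j = some q → ¬ Meets c i i j j p q}

namespace PathSystem

section Basic

variable {c n : ℕ} (x : PathSystem c n)

def path? (i : Fin n) : Option (ℕ → Bool) := (x.2 i).1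

def path (i : Fin n) : ℕ → Bool := (x.path? i).getD fun _ => false

def MeetsAt (i : Fin n) (t : ℕ) (j : Fin n) : Prop :=
  j ≠ i ∧ x.path? i ≠ none ∧ x.path? j ≠ none ∧ t ≤ c + i + x.1 i ∧
    ∃ u ≤ c + j + x.1 j, MeetAt i j (x.path i) (x.path j) t u

def IsIntersecting : Prop := ∃ i t j, x.MeetsAt i t j

variable {x} {i j : Fin n}

lemma path?_eq_some (h : x.path? i ≠ none) : x.path? i = some (x.path i) := by
  obtain ⟨p, hp⟩ := Option.ne_none_iff_exists'.1 h
  rw [path, hp]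
  rfl

lemma isPath_path (h : x.path? i ≠ none) : IsPath c i (x.1 i) (x.path i) := by
  have hx := (x.2 i).2
  rwa [show (x.2 i).1 = some (x.path i) from path?_eq_some h] at hx

lemma perm_apply_eq_of_path?_eq_none (h : x.path? i = none) : x.1 i = i := by
  have hx := (x.2 i).2
  rw [show (x.2 i).1 = none from h] at hx
  exact Fin.ext hx.symm

lemma ext {y : PathSystem c n} (h₁ : x.1 = y.1) (h₂ : ∀ i, x.path? i = y.path? i) :
    x = y := by
  obtain ⟨σ, f⟩ := x
  obtain ⟨τ, g⟩ := y
  cases h₁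
  congr
  funext i
  exact Subtype.ext (h₂ i)

lemma MeetsAt.symm {t : ℕ} (h : x.MeetsAt i t j) : ∃ u, x.MeetsAt j u i := by
  obtain ⟨hji, hi, hj, ht, u, hu, hm⟩ := h
  exact ⟨u, hji.symm, hj, hi, hu, t, ht, hm.symm⟩

lemma isIntersecting_of_perm_ne_one (hx : x.1 ≠ 1) : x.IsIntersecting := by
  obtain ⟨i, j, hij, hσ, hi, hj⟩ := Equiv.Perm.exists_inversion_of_ne_one hx
  have hri : x.path? i ≠ none := fun h => hi (perm_apply_eq_of_path?_eq_none h)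
  have hrj : x.path? j ≠ none := fun h => hj (perm_apply_eq_of_path?_eq_none h)
  obtain ⟨t, ht, u, hu, hm⟩ := (isPath_path hri).meets_of_lt_of_lt (isPath_path hrj) hij hσ
  exact ⟨i, t, j, hij.ne', hri, hrj, ht, u, hu, hm⟩

end Basic

section Switch

variable {c n : ℕ} (x : PathSystem c n) (h : x.IsIntersecting)

/-! The sign-reversing involution switches the tails of the paths from `pivot` and `partner`
after their first meeting: `pivot` is the smallest source whose path meets another one,
`pivotTime` the first time at which it does, and `partner` the smallest source of a path met
there, after `partnerTime` of its steps. -/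

noncomputable def pivot : Fin n := wellFounded_lt.min {i | ∃ t j, x.MeetsAt i t j} h

noncomputable def pivotTime : ℕ :=
  wellFounded_lt.min {t | ∃ j, x.MeetsAt (x.pivot h) t j} (wellFounded_lt.min_mem _ h)

noncomputable def partner : Fin n :=
  wellFounded_lt.min {j | x.MeetsAt (x.pivot h) (x.pivotTime h) j}
    (wellFounded_lt.min_mem {t | ∃ j, x.MeetsAt (x.pivot h) t j} _)

noncomputable def partnerTime : ℕ := x.pivotTime h + x.partner h - x.pivot h

lemma pivot_le {i j : Fin n} {t : ℕ} (hm : x.MeetsAt i t j) : x.pivot h ≤ i :=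
  wellFounded_lt.min_le (s := {i | ∃ t j, x.MeetsAt i t j}) ⟨t, j, hm⟩

lemma exists_meetsAt_pivot : ∃ t j, x.MeetsAt (x.pivot h) t j := wellFounded_lt.min_mem _ h

lemma pivotTime_le {j : Fin n} {t : ℕ} (hm : x.MeetsAt (x.pivot h) t j) : x.pivotTime h ≤ t :=
  wellFounded_lt.min_le (s := {t | ∃ j, x.MeetsAt (x.pivot h) t j}) ⟨j, hm⟩

lemma exists_meetsAt_pivotTime : ∃ j, x.MeetsAt (x.pivot h) (x.pivotTime h) j :=
  wellFounded_lt.min_mem {t | ∃ j, x.MeetsAt (x.pivot h) t j} _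

lemma partner_le {j : Fin n} (hm : x.MeetsAt (x.pivot h) (x.pivotTime h) j) : x.partner h ≤ j :=
  wellFounded_lt.min_le (s := {j | x.MeetsAt (x.pivot h) (x.pivotTime h) j}) hm

lemma meetsAt_partner : x.MeetsAt (x.pivot h) (x.pivotTime h) (x.partner h) :=
  wellFounded_lt.min_mem {j | x.MeetsAt (x.pivot h) (x.pivotTime h) j} _

lemma pivot_lt_partner : x.pivot h < x.partner h := by
  obtain ⟨u, hu⟩ := (x.meetsAt_partner h).symm
  exact lt_of_le_of_ne (x.pivot_le h hu) (x.meetsAt_partner h).1.symm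

lemma meetAt_partnerTime :
    x.partnerTime h ≤ c + x.partner h + x.1 (x.partner h) ∧
      MeetAt (x.pivot h) (x.partner h) (x.path (x.pivot h)) (x.path (x.partner h))
        (x.pivotTime h) (x.partnerTime h) := by
  obtain ⟨-, -, -, -, u, hu, hm⟩ := x.meetsAt_partner h
  have := x.pivot_lt_partner h
  have := hm.1
  obtain rfl : u = x.partnerTime h := by unfold partnerTime; omega
  exact ⟨hu, hm⟩

lemma pivotTime_le_partner_sink : x.pivotTime h ≤ c + x.pivot h + x.1 (x.partner h) := by
  have := (x.meetAt_partnerTime h).1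
  have := (x.meetAt_partnerTime h).2.1
  omega

lemma partnerTime_le_pivot_sink : x.partnerTime h ≤ c + x.partner h + x.1 (x.pivot h) := by
  have := (x.meetsAt_partner h).2.2.2.1
  have := (x.meetAt_partnerTime h).2.1
  omega

noncomputable def switchedPath? (i : Fin n) : Option (ℕ → Bool) :=
  if i = x.pivot h then
    some (splice (x.path (x.pivot h)) (x.path (x.partner h)) (x.pivotTime h) (x.partnerTime h))
  else if i = x.partner h then
    some (splice (x.path (x.partner h)) (x.path (x.pivot h)) (x.partnerTime h) (x.pivotTime h))
  else x.path? i

lemma switchedPath?_spec (i : Fin n) :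
    (x.switchedPath? h i).elim ((i : ℕ) = (x.1 * Equiv.swap (x.pivot h) (x.partner h)) i)
      (IsPath c i ((x.1 * Equiv.swap (x.pivot h) (x.partner h)) i)) := by
  obtain ⟨-, h₀, h₁, ht₀, -⟩ := x.meetsAt_partner h
  obtain ⟨ht₁, hm⟩ := x.meetAt_partnerTime h
  unfold switchedPath?
  split_ifs with hi₀ hi₁
  · subst hi₀
    rw [Equiv.Perm.mul_apply, Equiv.swap_apply_left]
    exact (isPath_path h₀).splice (isPath_path h₁) ht₁ hm
  · subst hi₁
    rw [Equiv.Perm.mul_apply, Equiv.swap_apply_right]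
    exact (isPath_path h₁).splice (isPath_path h₀) ht₀ hm.symm
  · rw [Equiv.Perm.mul_apply, Equiv.swap_apply_of_ne_of_ne hi₀ hi₁]
    exact (x.2 i).2

noncomputable def switch : PathSystem c n :=
  ⟨x.1 * Equiv.swap (x.pivot h) (x.partner h),
    fun i => ⟨x.switchedPath? h i, x.switchedPath?_spec h i⟩⟩

lemma switch_perm : (x.switch h).1 = x.1 * Equiv.swap (x.pivot h) (x.partner h) := rfl

lemma switch_perm_pivot : (x.switch h).1 (x.pivot h) = x.1 (x.partner h) := by
  rw [switch_perm, Equiv.Perm.mul_apply, Equiv.swap_apply_left]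

lemma switch_perm_partner : (x.switch h).1 (x.partner h) = x.1 (x.pivot h) := by
  rw [switch_perm, Equiv.Perm.mul_apply, Equiv.swap_apply_right]

lemma switch_perm_of_ne {i : Fin n} (h₀ : i ≠ x.pivot h) (h₁ : i ≠ x.partner h) :
    (x.switch h).1 i = x.1 i := by
  rw [switch_perm, Equiv.Perm.mul_apply, Equiv.swap_apply_of_ne_of_ne h₀ h₁]

lemma path?_switch_pivot : (x.switch h).path? (x.pivot h) =
    some (splice (x.path (x.pivot h)) (x.path (x.partner h)) (x.pivotTime h) (x.partnerTime h)) :=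
  if_pos rfl

lemma path?_switch_partner : (x.switch h).path? (x.partner h) =
    some (splice (x.path (x.partner h)) (x.path (x.pivot h)) (x.partnerTime h) (x.pivotTime h)) :=
  (if_neg (x.pivot_lt_partner h).ne').trans (if_pos rfl)

lemma path?_switch_of_ne {i : Fin n} (h₀ : i ≠ x.pivot h) (h₁ : i ≠ x.partner h) :
    (x.switch h).path? i = x.path? i :=
  (if_neg h₀).trans (if_neg h₁)

lemma path_switch_pivot : (x.switch h).path (x.pivot h) =
    splice (x.path (x.pivot h)) (x.path (x.partner h)) (x.pivotTime h) (x.partnerTime h) := by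
  rw [path, path?_switch_pivot]; rfl

lemma path_switch_partner : (x.switch h).path (x.partner h) =
    splice (x.path (x.partner h)) (x.path (x.pivot h)) (x.partnerTime h) (x.pivotTime h) := by
  rw [path, path?_switch_partner]; rfl

lemma path_switch_of_ne {i : Fin n} (h₀ : i ≠ x.pivot h) (h₁ : i ≠ x.partner h) :
    (x.switch h).path i = x.path i := by
  rw [path, path?_switch_of_ne x h h₀ h₁, path]

/-- Together, the pivot and partner paths visit the same points before and after the switch. -/
lemma exists_meetsAt_of_meetsAt_switch {i j : Fin n} {t : ℕ} (h₀ : i ≠ x.pivot h)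
    (h₁ : i ≠ x.partner h) (hm : (x.switch h).MeetsAt i t j) : ∃ j', x.MeetsAt i t j' := by
  obtain ⟨hji, hri, hrj, ht, u, hu, hm⟩ := hm
  rw [path?_switch_of_ne x h h₀ h₁] at hri
  rw [switch_perm_of_ne x h h₀ h₁] at ht
  rw [path_switch_of_ne x h h₀ h₁] at hm
  obtain ⟨-, hr₀, hr₁, ht₀, -⟩ := x.meetsAt_partner h
  obtain ⟨ht₁, hm₀₁⟩ := x.meetAt_partnerTime h
  have := hm₀₁.1
  by_cases hj₀ : j = x.pivot h
  · subst hj₀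
    rw [path_switch_pivot] at hm
    rw [switch_perm_pivot] at hu
    rcases le_or_gt u (x.pivotTime h) with hut | hut
    · exact ⟨_, h₀.symm, hri, hr₀, ht, u, hut.trans ht₀, (meetAt_splice_of_le hut).1 hm⟩
    · refine ⟨_, h₁.symm, hri, hr₁, ht, u - x.pivotTime h + x.partnerTime h, by omega, ?_⟩
      exact (meetAt_splice_of_ge hm₀₁ hut.le).1 hm
  by_cases hj₁ : j = x.partner h
  · subst hj₁
    rw [path_switch_partner] at hm
    rw [switch_perm_partner] at hu
    rcases le_or_gt u (x.partnerTime h) with hut | hut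
    · exact ⟨_, h₁.symm, hri, hr₁, ht, u, hut.trans ht₁, (meetAt_splice_of_le hut).1 hm⟩
    · refine ⟨_, h₀.symm, hri, hr₀, ht, u - x.partnerTime h + x.pivotTime h, by omega, ?_⟩
      exact (meetAt_splice_of_ge hm₀₁.symm hut.le).1 hm
  rw [path?_switch_of_ne x h hj₀ hj₁] at hrj
  rw [switch_perm_of_ne x h hj₀ hj₁] at hu
  rw [path_switch_of_ne x h hj₀ hj₁] at hm
  exact ⟨j, hji, hri, hrj, ht, u, hu, hm⟩

lemma meetsAt_of_meetsAt_switch_pivot {j : Fin n} {t : ℕ} (ht₀ : t ≤ x.pivotTime h)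
    (hm : (x.switch h).MeetsAt (x.pivot h) t j) : x.MeetsAt (x.pivot h) t j := by
  obtain ⟨hji, -, hrj, -, u, hu, hm⟩ := hm
  rw [path_switch_pivot] at hm
  replace hm := ((meetAt_splice_of_le ht₀).1 hm.symm).symm
  obtain ⟨-, hr₀, hr₁, ht₀', -⟩ := x.meetsAt_partner h
  by_cases hj₁ : j = x.partner h
  · subst hj₁
    obtain ⟨ht₁, hm₀₁⟩ := x.meetAt_partnerTime h
    -- the meeting comes no later than `pivotTime`, hence before the splice point of the partner
    have hut : u ≤ x.partnerTime h := by have := hm.1; have := hm₀₁.1; omega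
    rw [path_switch_partner, meetAt_splice_of_le hut] at hm
    exact ⟨hji, hr₀, hr₁, ht₀.trans ht₀', u, hut.trans ht₁, hm⟩
  rw [path?_switch_of_ne x h hji hj₁] at hrj
  rw [switch_perm_of_ne x h hji hj₁] at hu
  rw [path_switch_of_ne x h hji hj₁] at hm
  exact ⟨hji, hr₀, hrj, ht₀.trans ht₀', u, hu, hm⟩

lemma meetsAt_switch_pivot {j : Fin n} (hm : x.MeetsAt (x.pivot h) (x.pivotTime h) j) :
    (x.switch h).MeetsAt (x.pivot h) (x.pivotTime h) j := by
  obtain ⟨hji, -, hrj, -, u, hu, hm⟩ := hm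
  refine ⟨hji, by rw [path?_switch_pivot]; exact Option.some_ne_none _, ?_,
    by rw [switch_perm_pivot]; exact x.pivotTime_le_partner_sink h, ?_⟩
  · by_cases hj₁ : j = x.partner h
    · rw [hj₁, path?_switch_partner]; exact Option.some_ne_none _
    · rwa [path?_switch_of_ne x h hji hj₁]
  by_cases hj₁ : j = x.partner h
  · subst hj₁
    refine ⟨x.partnerTime h, ?_, ?_⟩
    · rw [switch_perm_partner]; exact x.partnerTime_le_pivot_sink h
    · rw [path_switch_pivot, path_switch_partner]
      exact (x.meetAt_partnerTime h).2.splice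
  refine ⟨u, by rwa [switch_perm_of_ne x h hji hj₁], ?_⟩
  rw [path_switch_pivot, path_switch_of_ne x h hji hj₁]
  exact ((meetAt_splice_of_le le_rfl).2 hm.symm).symm

lemma isIntersecting_switch : (x.switch h).IsIntersecting :=
  ⟨_, _, _, x.meetsAt_switch_pivot h (x.meetsAt_partner h)⟩

lemma pivot_switch : (x.switch h).pivot (x.isIntersecting_switch h) = x.pivot h := by
  refine le_antisymm (pivot_le _ _ (x.meetsAt_switch_pivot h (x.meetsAt_partner h))) ?_
  obtain ⟨t, j, hm⟩ := exists_meetsAt_pivot _ (x.isIntersecting_switch h)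
  set i := (x.switch h).pivot (x.isIntersecting_switch h)
  by_cases h₀ : i = x.pivot h
  · exact h₀.ge
  by_cases h₁ : i = x.partner h
  · exact h₁ ▸ (x.pivot_lt_partner h).le
  obtain ⟨j', hj'⟩ := x.exists_meetsAt_of_meetsAt_switch h h₀ h₁ hm
  exact x.pivot_le h hj'

lemma pivotTime_switch :
    (x.switch h).pivotTime (x.isIntersecting_switch h) = x.pivotTime h := by
  have hm := x.meetsAt_switch_pivot h (x.meetsAt_partner h)
  rw [← pivot_switch] at hm
  refine le_antisymm (pivotTime_le _ _ hm) (not_lt.1 fun hlt => ?_)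
  obtain ⟨j, hj⟩ := exists_meetsAt_pivotTime _ (x.isIntersecting_switch h)
  rw [pivot_switch] at hj
  exact hlt.not_ge (x.pivotTime_le h (x.meetsAt_of_meetsAt_switch_pivot h hlt.le hj))

lemma partner_switch : (x.switch h).partner (x.isIntersecting_switch h) = x.partner h := by
  have hm := x.meetsAt_switch_pivot h (x.meetsAt_partner h)
  rw [← pivot_switch, ← pivotTime_switch] at hm
  refine le_antisymm (partner_le _ _ hm) (x.partner_le h ?_)
  have hj := meetsAt_partner _ (x.isIntersecting_switch h)
  rw [pivot_switch, pivotTime_switch] at hj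
  exact x.meetsAt_of_meetsAt_switch_pivot h le_rfl hj

lemma partnerTime_switch :
    (x.switch h).partnerTime (x.isIntersecting_switch h) = x.partnerTime h := by
  rw [partnerTime, partnerTime, pivotTime_switch, partner_switch, pivot_switch]

lemma switch_switch : (x.switch h).switch (x.isIntersecting_switch h) = x := by
  have hr₀ := (x.meetsAt_partner h).2.1
  have hr₁ := (x.meetsAt_partner h).2.2.1
  refine ext ?_ fun i => ?_
  · rw [switch_perm, switch_perm, pivot_switch, partner_switch, mul_assoc,
      Equiv.swap_mul_self, mul_one]
  by_cases h₀ : i = x.pivot h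
  · rw [h₀, ← pivot_switch x h, path?_switch_pivot, pivot_switch, partner_switch,
      pivotTime_switch, partnerTime_switch, path_switch_pivot, path_switch_partner,
      splice_splice, path?_eq_some hr₀]
  by_cases h₁ : i = x.partner h
  · rw [h₁, ← partner_switch x h, path?_switch_partner, pivot_switch, partner_switch,
      pivotTime_switch, partnerTime_switch, path_switch_pivot, path_switch_partner,
      splice_splice, path?_eq_some hr₁]
  rw [path?_switch_of_ne _ _ (by rwa [pivot_switch]) (by rwa [partner_switch]),
    path?_switch_of_ne x h h₀ h₁]

lemma sign_switch : Equiv.Perm.sign (x.switch h).1 = -Equiv.Perm.sign x.1 := by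
  rw [switch_perm, Equiv.Perm.sign_mul, Equiv.Perm.sign_swap (x.pivot_lt_partner h).ne,
    mul_neg_one]

end Switch

lemma perm_eq_one_of_not_isIntersecting {c n : ℕ} {x : PathSystem c n}
    (hx : ¬ x.IsIntersecting) : x.1 = 1 :=
  by_contra fun h => hx (isIntersecting_of_perm_ne_one h)

open Classical in
lemma sum_sign_eq_card_not_isIntersecting (R : Type*) [CommRing R] (c n : ℕ) :
    ∑ x : PathSystem c n, ((Equiv.Perm.sign x.1 : ℤ) : R) =
      #{x : PathSystem c n | ¬ x.IsIntersecting} := by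
  rw [← sum_filter_add_sum_filter_not univ (IsIntersecting (c := c) (n := n))]
  have hbad : ∑ x ∈ univ.filter (IsIntersecting (c := c) (n := n)),
      ((Equiv.Perm.sign x.1 : ℤ) : R) = 0 :=
    sum_involution (fun x hx => x.switch (mem_filter.1 hx).2)
      (fun x hx => by rw [sign_switch]; push_cast; ring)
      (fun x hx _ heq => units_ne_neg_self (Equiv.Perm.sign x.1) <| by
        rw [← sign_switch x (mem_filter.1 hx).2, heq])
      (fun x hx => mem_filter.2 ⟨mem_univ _, isIntersecting_switch x _⟩)
      (fun x hx => switch_switch x _)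
  rw [hbad, zero_add, sum_congr rfl fun x hx => by
    rw [perm_eq_one_of_not_isIntersecting (mem_filter.1 hx).2, Equiv.Perm.sign_one]]
  simp

section NonIntersecting

variable {c n : ℕ}

def toNonIntersectingFamily (x : {x : PathSystem c n // ¬ x.IsIntersecting}) :
    NonIntersectingFamily c n := by
  refine ⟨x.1.path?, fun i p hp => ?_, fun i j p q hij hp hq hm => x.2 ?_⟩
  · have hx := (x.1.2 i).2
    rw [show (x.1.2 i).1 = some p from hp, perm_eq_one_of_not_isIntersecting x.2] at hx
    exact hx
  · rw [show p = x.1.path i by simp [path, hp], show q = x.1.path j by simp [path, hq]] at hm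
    obtain ⟨t, ht, u, hu, hm⟩ := hm
    have hσ := perm_eq_one_of_not_isIntersecting x.2
    exact ⟨i, t, j, hij.symm, by simp [hp], by simp [hq], by simpa [hσ] using ht, u,
      by simpa [hσ] using hu, hm⟩

def ofNonIntersectingFamily (o : NonIntersectingFamily c n) :
    {x : PathSystem c n // ¬ x.IsIntersecting} := by
  refine ⟨⟨1, fun i => ⟨o.1 i, ?_⟩⟩, ?_⟩
  · rcases hi : o.1 i with _ | p
    · rfl
    · exact o.2.1 i p hi
  · rintro ⟨i, t, j, hji, hi, hj, ht, u, hu, hm⟩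
    exact o.2.2 i j _ _ hji.symm (path?_eq_some hi) (path?_eq_some hj) ⟨t, ht, u, hu, hm⟩

def nonIntersectingEquiv (c n : ℕ) :
    {x : PathSystem c n // ¬ x.IsIntersecting} ≃ NonIntersectingFamily c n where
  toFun := toNonIntersectingFamily
  invFun := ofNonIntersectingFamily
  left_inv x := Subtype.ext <| ext (perm_eq_one_of_not_isIntersecting x.2).symm fun _ => rfl
  right_inv _ := rfl

end NonIntersecting

end PathSystem

namespace CSSPP

variable {c n : ℕ} (C : CSSPP c n)

@[ext]
lemma ext {D : CSSPP c n} (hrows : C.rows = D.rows) (hlen : C.len = D.len)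
    (hpart : C.part = D.part) : C = D := by
  cases C; cases D; cases hrows; cases hlen; cases hpart; rfl

lemma len_strictAntiOn : StrictAntiOn C.len (Set.Iio C.rows) :=
  strictAntiOn_of_succ_lt Set.ordConnected_Iio fun k _ _ hk => by
    simp only [Order.succ_eq_add_one, Set.mem_Iio] at hk
    exact C.len_strict k hk

variable {C}

lemma len_lt_len {k k' : ℕ} (h : k < k') (h' : k' < C.rows) : C.len k' < C.len k :=
  C.len_strictAntiOn (Set.mem_Iio.2 (h.trans h')) (Set.mem_Iio.2 h') h

lemma len_injOn : Set.InjOn C.len (Set.Iio C.rows) := C.len_strictAntiOn.injOn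

lemma len_le {k : ℕ} (hk : k < C.rows) : C.len k ≤ n := by
  rcases Nat.eq_zero_or_pos k with rfl | h
  · exact C.first_row_le hk
  · exact (len_lt_len h hk).le.trans (C.first_row_le (by omega))

lemma isRow {k : ℕ} (hk : k < C.rows) : IsRow c (C.len k - 1) (C.part k) where
  head := by rw [C.class_eq k hk]; have := C.len_pos k hk; omega
  succ_le j hj := C.row_weak_dec k j hk (by omega)
  pos j hj := C.part_pos k j hk (by have := C.len_pos k hk; omega)

lemma strictlyBelow_succ {k : ℕ} (h : k + 1 < C.rows) :
    StrictlyBelow c (C.len (k + 1) - 1) (C.len k - 1)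
      (pathOfRow (C.len (k + 1) - 1) (C.part (k + 1))) (pathOfRow (C.len k - 1) (C.part k)) := by
  have := C.len_strict k h
  have := C.len_pos (k + 1) h
  exact (isRow (by omega)).strictlyBelow_of_lt (isRow h) (by omega)
    fun j hj => C.col_strict_dec k j h (by omega)

lemma strictlyBelow {k k' : ℕ} (h : k < k') (h' : k' < C.rows) :
    StrictlyBelow c (C.len k' - 1) (C.len k - 1) (pathOfRow (C.len k' - 1) (C.part k'))
      (pathOfRow (C.len k - 1) (C.part k)) := by
  induction k', h using Nat.le_induction with
  | base => exact strictlyBelow_succ h'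
  | succ k' hk ih =>
    have := C.len_strict k' h'
    have := C.len_pos (k' + 1) h'
    have := len_lt_len (C := C) (k := k) (k' := k') hk (by omega)
    exact (strictlyBelow_succ h').trans (ih (by omega)) (by omega) (by omega)

lemma not_meets {k k' : ℕ} (hk : k < C.rows) (hk' : k' < C.rows) (hne : k ≠ k') :
    ¬ Meets c (C.len k - 1) (C.len k - 1) (C.len k' - 1) (C.len k' - 1)
      (pathOfRow (C.len k - 1) (C.part k)) (pathOfRow (C.len k' - 1) (C.part k')) := by
  rcases hne.lt_or_gt with h | h
  · have := len_lt_len h hk'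
    have := C.len_pos k' hk'
    exact (strictlyBelow_iff_not_meets (by omega)).1 (strictlyBelow h hk')
  · have := len_lt_len h hk
    have := C.len_pos k hk
    exact fun hm => (strictlyBelow_iff_not_meets (by omega)).1 (strictlyBelow h hk) hm.symm

variable (C)

open Classical in
noncomputable def rowPath? (s : Fin n) : Option (ℕ → Bool) :=
  if h : ∃ k < C.rows, C.len k = s + 1 then some (pathOfRow s (C.part h.choose)) else none

variable {C}

lemma rowPath?_eq_some {k : ℕ} {s : Fin n} (hk : k < C.rows) (hlen : C.len k = s + 1) :
    C.rowPath? s = some (pathOfRow s (C.part k)) := by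
  have h : ∃ k < C.rows, C.len k = s + 1 := ⟨k, hk, hlen⟩
  rw [rowPath?, dif_pos h, len_injOn h.choose_spec.1 hk (h.choose_spec.2.trans hlen.symm)]

lemma isSome_rowPath? {s : Fin n} : (C.rowPath? s).isSome ↔ ∃ k < C.rows, C.len k = s + 1 := by
  unfold rowPath?
  split_ifs with h <;> simp [h]

lemma rowPath?_eq_none {s : Fin n} (h : ∀ k < C.rows, C.len k ≠ s + 1) : C.rowPath? s = none :=
  Option.not_isSome_iff_eq_none.1 fun hs => by
    obtain ⟨k, hk, hlen⟩ := isSome_rowPath?.1 hs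
    exact h k hk hlen

lemma exists_of_rowPath?_eq_some {s : Fin n} {p : ℕ → Bool} (hp : C.rowPath? s = some p) :
    ∃ k < C.rows, C.len k = s + 1 ∧ p = pathOfRow s (C.part k) := by
  by_cases h : ∃ k < C.rows, C.len k = s + 1
  · obtain ⟨k, hk, hlen⟩ := h
    rw [rowPath?_eq_some hk hlen, Option.some_inj] at hp
    exact ⟨k, hk, hlen, hp.symm⟩
  · rw [rowPath?, dif_neg h] at hp
    cases hp

variable (C)

noncomputable def toFamily : NonIntersectingFamily c n := by
  refine ⟨C.rowPath?, fun s p hp => ?_, fun s s' p q hne hp hq => ?_⟩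
  · obtain ⟨k, hk, hlen, rfl⟩ := exists_of_rowPath?_eq_some hp
    simpa [hlen] using (isRow hk).isPath_pathOfRow
  · obtain ⟨k, hk, hlen, rfl⟩ := exists_of_rowPath?_eq_some hp
    obtain ⟨k', hk', hlen', rfl⟩ := exists_of_rowPath?_eq_some hq
    have hkk : k ≠ k' := by rintro rfl; exact hne (Fin.ext (by omega))
    simpa [hlen, hlen'] using not_meets hk hk' hkk

end CSSPP

namespace NonIntersectingFamily

variable {c n : ℕ} (o : NonIntersectingFamily c n)

def support : Finset (Fin n) := {s | (o.1 s).isSome}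

/-- The sources of `o` in decreasing order: the `k`-th one gives row `k`. -/
noncomputable def source (k : Fin #o.support) : Fin n := o.support.orderEmbOfFin rfl k.rev

def path (s : Fin n) : ℕ → Bool := (o.1 s).getD fun _ => false

variable {o}

lemma mem_support {s : Fin n} : s ∈ o.support ↔ o.1 s = some (o.path s) := by
  rw [support, mem_filter, path]
  cases o.1 s <;> simp

lemma isPath_path {s : Fin n} (hs : s ∈ o.support) : IsPath c s s (o.path s) :=
  o.2.1 s _ (mem_support.1 hs)

lemma source_mem (k : Fin #o.support) : o.source k ∈ o.support :=
  o.support.orderEmbOfFin_mem rfl _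

lemma source_strictAnti : StrictAnti o.source := fun _ _ h =>
  (o.support.orderEmbOfFin rfl).strictMono (Fin.rev_lt_rev.2 h)

lemma exists_source_eq {s : Fin n} (hs : s ∈ o.support) : ∃ k, o.source k = s := by
  obtain ⟨k, hk⟩ : s ∈ Set.range (o.support.orderEmbOfFin rfl) := by
    rw [Finset.range_orderEmbOfFin]; exact hs
  exact ⟨k.rev, by rw [source, Fin.rev_rev, hk]⟩

lemma eq_source {f : Fin #o.support → Fin n} (hf : ∀ k, f k ∈ o.support)
    (hanti : StrictAnti f) : f = o.source := by
  have := Finset.orderEmbOfFin_unique rfl (f := f ∘ Fin.rev) (fun k => hf _)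
    fun _ _ h => hanti (Fin.rev_lt_rev.2 h)
  funext k
  simpa [source] using congrFun this k.rev

variable (o)

noncomputable def row (k : Fin #o.support) : ℕ → ℕ :=
  rowOfPath c (o.source k) (o.path (o.source k))

lemma isRow_row (k : Fin #o.support) : IsRow c (o.source k) (o.row k) :=
  (isPath_path (source_mem k)).isRow_rowOfPath

lemma row_succ_lt {i j : ℕ} (hi : i + 1 < #o.support) (hj : j ≤ o.source ⟨i + 1, hi⟩) :
    o.row ⟨i + 1, hi⟩ j < o.row ⟨i, by omega⟩ (j + 1) := by
  set k : Fin #o.support := ⟨i, by omega⟩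
  set k' : Fin #o.support := ⟨i + 1, hi⟩
  have hlt : o.source k' < o.source k := source_strictAnti (Fin.lt_def.2 (Nat.lt_succ_self i))
  have hp := isPath_path (source_mem k)
  have hp' := isPath_path (source_mem k')
  have hnm := o.2.2 _ _ _ _ hlt.ne' (mem_support.1 (source_mem k)) (mem_support.1 (source_mem k'))
  rw [← strictlyBelow_iff_not_meets hlt, ← hp.pathOfRow_rowOfPath,
    ← hp'.pathOfRow_rowOfPath] at hnm
  exact (o.isRow_row k).lt_of_strictlyBelow (o.isRow_row k') hlt hnm hj

noncomputable def toCSSPP : CSSPP c n where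
  rows := #o.support
  len i := if h : i < #o.support then o.source ⟨i, h⟩ + 1 else 0
  part i j := if h : i < #o.support then o.row ⟨i, h⟩ j else 0
  len_strict i hi := by
    rw [dif_pos hi, dif_pos (by omega)]
    exact Nat.add_lt_add_right (source_strictAnti (Fin.lt_def.2 (Nat.lt_succ_self i))) 1
  len_pos i hi := by rw [dif_pos hi]; omega
  first_row_le h := by rw [dif_pos h]; exact (o.source _).isLt
  part_pos i j hi hj := by
    rw [dif_pos hi] at hj ⊢
    exact (o.isRow_row ⟨i, hi⟩).pos j (by omega)
  row_weak_dec i j hi hj := by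
    simp only [dif_pos hi] at hj ⊢
    exact (o.isRow_row ⟨i, hi⟩).succ_le j (by omega)
  col_strict_dec i j hi hj := by
    rw [dif_pos hi] at hj
    rw [dif_pos hi, dif_pos (by omega)]
    exact o.row_succ_lt hi (by omega)
  class_eq i hi := by
    rw [dif_pos hi, dif_pos hi, (o.isRow_row _).head]
    ring
  len_eq_zero i hi := dif_neg (by omega)
  part_eq_zero i j hij := by
    split_ifs with hi
    · rw [dif_pos hi] at hij
      exact rowOfPath_of_gt (by omega)
    · rfl

lemma toFamily_toCSSPP (o : NonIntersectingFamily c n) : o.toCSSPP.toFamily = o := by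
  refine Subtype.ext (funext fun s => ?_)
  change o.toCSSPP.rowPath? s = o.1 s
  by_cases hs : s ∈ o.support
  · obtain ⟨k, rfl⟩ := exists_source_eq hs
    have hlen : o.toCSSPP.len k = o.source k + 1 := dif_pos k.2
    have hpart : o.toCSSPP.part k = o.row k := funext fun j => dif_pos k.2
    rw [CSSPP.rowPath?_eq_some k.2 hlen, hpart, row, (isPath_path hs).pathOfRow_rowOfPath,
      mem_support.1 hs]
  · have hnone : o.1 s = none := by simpa [support] using hs
    rw [hnone, CSSPP.rowPath?_eq_none]
    intro k hk hlen
    have hsk : o.source ⟨k, hk⟩ = s := Fin.ext (by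
      have : o.toCSSPP.len k = o.source ⟨k, hk⟩ + 1 := dif_pos hk
      omega)
    exact hs (hsk ▸ source_mem _)

end NonIntersectingFamily

namespace CSSPP

variable {c n : ℕ} {C : CSSPP c n}

lemma mem_support_toFamily {s : Fin n} :
    s ∈ C.toFamily.support ↔ ∃ k < C.rows, C.len k = s + 1 := by
  rw [NonIntersectingFamily.support, mem_filter, ← isSome_rowPath?]
  simp [toFamily]

lemma card_support_toFamily : #C.toFamily.support = C.rows := by
  rw [← card_range C.rows]
  symm
  refine card_bij (fun k hk => ⟨C.len k - 1, ?_⟩) (fun k hk => ?_) (fun k hk k' hk' he => ?_)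
    fun s hs => ?_
  · have := len_le (mem_range.1 hk); have := C.len_pos k (mem_range.1 hk); omega
  · have := C.len_pos k (mem_range.1 hk)
    exact mem_support_toFamily.2 ⟨k, mem_range.1 hk, by simp only; omega⟩
  · have := C.len_pos k (mem_range.1 hk)
    have := C.len_pos k' (mem_range.1 hk')
    exact len_injOn (mem_range.1 hk) (mem_range.1 hk') (by simp only [Fin.mk.injEq] at he; omega)
  · obtain ⟨k, hk, hlen⟩ := mem_support_toFamily.1 hs
    exact ⟨k, mem_range.2 hk, Fin.ext (by simp only; omega)⟩

lemma source_toFamily (k : Fin #C.toFamily.support) :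
    (C.toFamily.source k : ℕ) = C.len k - 1 := by
  have hrows (k : Fin #C.toFamily.support) : (k : ℕ) < C.rows := card_support_toFamily ▸ k.2
  let f (k : Fin #C.toFamily.support) : Fin n :=
    ⟨C.len k - 1, by have := len_le (hrows k); have := C.len_pos k (hrows k); omega⟩
  have hf : f = C.toFamily.source := by
    refine NonIntersectingFamily.eq_source (fun k => ?_) fun k k' hkk' => ?_
    · have := C.len_pos k (hrows k)
      exact mem_support_toFamily.2 ⟨k, hrows k, by simp only [f]; omega⟩
    · have := len_lt_len hkk' (hrows k')
      have := C.len_pos k' (hrows k')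
      simp only [f, Fin.lt_def]
      omega
  rw [← hf]

lemma row_toFamily {i : ℕ} (hi : i < #C.toFamily.support) :
    C.toFamily.row ⟨i, hi⟩ = C.part i := by
  have hi' : i < C.rows := card_support_toFamily ▸ hi
  set s := C.toFamily.source ⟨i, hi⟩
  have hs : (s : ℕ) = C.len i - 1 := source_toFamily _
  have hlen : C.len i = s + 1 := by have := C.len_pos i hi'; omega
  have hpath : C.toFamily.path s = pathOfRow s (C.part i) := by
    change (C.rowPath? s).getD _ = _
    rw [rowPath?_eq_some hi' hlen]
    rfl
  have hrow : IsRow c s (C.part i) := by rw [hs]; exact isRow hi'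
  funext j
  rw [NonIntersectingFamily.row, hpath]
  rcases le_or_gt j s with hj | hj
  · exact hrow.rowOfPath_pathOfRow hj
  · rw [rowOfPath_of_gt hj, C.part_eq_zero i j (by omega)]

variable (C)

lemma toCSSPP_toFamily : C.toFamily.toCSSPP = C := by
  have hrows := card_support_toFamily (C := C)
  ext1
  · exact hrows
  · funext i
    change (if h : i < _ then _ else 0) = _
    split_ifs with hi
    · rw [source_toFamily]
      have := C.len_pos i (hrows ▸ hi)
      simp only
      omega
    · exact (C.len_eq_zero i (by omega)).symm
  · funext i j
    change (if h : i < _ then _ else 0) = _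
    split_ifs with hi
    · exact congrFun (row_toFamily hi) j
    · exact (C.part_eq_zero i j (by omega)).symm

noncomputable def equivNonIntersectingFamily (c n : ℕ) :
    CSSPP c n ≃ NonIntersectingFamily c n where
  toFun := CSSPP.toFamily
  invFun := NonIntersectingFamily.toCSSPP
  left_inv := CSSPP.toCSSPP_toFamily
  right_inv := NonIntersectingFamily.toFamily_toCSSPP

end CSSPP

/-- Andrews: the number of column strict shifted plane partitions of class
`l-1` (`l ≥ 2`) with at most `n` parts in the first row equals
`det_{0≤i,j≤n-1} ( C(i+j+l-1, i) + δ_{i,j} )`. -/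
theorem csspp_count_eq_det (n l : ℕ) (hl : 2 ≤ l) :
    (Nat.card (CSSPP (l - 1) n) : ℚ) =
      Matrix.det (Matrix.of fun i j : Fin n =>
        (((i : ℕ) + (j : ℕ) + l - 1).choose (i : ℕ) : ℚ) + if i = j then 1 else 0) := by
  classical
  have hentries : (fun i j : Fin n => (((i : ℕ) + (j : ℕ) + l - 1).choose (i : ℕ) : ℚ) +
      if i = j then 1 else 0) =
      fun i j : Fin n => (((l - 1 + i + j).choose i : ℕ) : ℚ) + if i = j then 1 else 0 := by
    funext i j
    rw [show (i : ℕ) + j + l - 1 = l - 1 + i + j by omega]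
  rw [hentries, det_eq_sum_sign_pathSystem, PathSystem.sum_sign_eq_card_not_isIntersecting,
    ← Fintype.card_subtype, ← Nat.card_eq_fintype_card,
    Nat.card_congr ((CSSPP.equivNonIntersectingFamily _ _).trans
      (PathSystem.nonIntersectingEquiv _ _).symm)]
end
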